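/- For x ∈ [0,1) and m ≥ 1, consider a two-sided SPRT with error probabilities α_k, β_k satisfying the Wald bounds α_k ≤ e^{−Δ}(1−β_k) and β_k ≤ e^{−Δ}(1−α_k) for some Δ > 0. Over the feasible region of (α_k, β_k), the function H(β_k, α_k) = β_k·log(β_k/(1−α_k)) + (1−β_k)·log((1−β_k)/α_k) is minimized at α_k = β_k = 1/(1+e^Δ), and its minimum value is Δ·tanh(Δ/2). -/

import Mathlib

/-!
`Hfun x y` is the relative entropy of `Bernoulli x` from `Bernoulli (1 - y)`, a jointly convex
function. Its tangent plane at the symmetric point `x = y = 1 / (1 + exp Δ)` therefore bounds it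
from below, and on the feasible region this affine function is minimised at that same point,
a linear program whose dual certificate rests on `exp (±2Δ) ≥ 1 ± 2Δ`.
-/

noncomputable def Hfun (x y : ℝ) : ℝ :=
  x * Real.log (x / (1 - y)) + (1 - x) * Real.log ((1 - x) / y)

open Real

theorem Real.tanh_half_eq (x : ℝ) : tanh (x / 2) = (exp x - 1) / (exp x + 1) := by
  have hsq : exp x = exp (x / 2) * exp (x / 2) := by rw [← exp_add, add_halves]
  rw [tanh_eq, exp_neg, hsq]
  field_simp

/-- The tangent plane of the `1`-homogeneous convex function `p * log (p / q)` along the ray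
`p / q = exp c`. -/
theorem Real.mul_add_one_sub_exp_mul_le_mul_log_div {p q : ℝ} (hp : 0 < p) (hq : 0 < q)
    (c : ℝ) : p * (c + 1) - exp c * q ≤ p * log (p / q) := by
  have h := one_sub_inv_le_log_of_pos (show 0 < p / (exp c * q) by positivity)
  rw [inv_div, div_mul_eq_div_div_swap, log_div (by positivity) (exp_pos c).ne', log_exp] at h
  calc p * (c + 1) - exp c * q = p * (1 - exp c * q / p) + p * c := by field_simp; ring
    _ ≤ p * (log (p / q) - c) + p * c := by gcongr
    _ = p * log (p / q) := by ring

/-- The tangent plane of `Hfun` at `x = y = 1 / (1 + exp Δ)`. -/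
noncomputable def HfunTangent (Δ x y : ℝ) : ℝ :=
  1 + Δ * (1 - 2 * x) - exp (-Δ) * (1 - y) - exp Δ * y

theorem HfunTangent_le_Hfun (Δ : ℝ) {x y : ℝ} (hx₀ : 0 < x) (hx₁ : x < 1) (hy₀ : 0 < y)
    (hy₁ : y < 1) : HfunTangent Δ x y ≤ Hfun x y := by
  have h₁ := mul_add_one_sub_exp_mul_le_mul_log_div hx₀ (sub_pos.2 hy₁) (-Δ)
  have h₂ := mul_add_one_sub_exp_mul_le_mul_log_div (sub_pos.2 hx₁) hy₀ Δ
  rw [HfunTangent, Hfun]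
  linarith

theorem mul_tanh_half_le_HfunTangent {Δ x y : ℝ} (hΔ : 0 < Δ) (hx : x ≤ exp (-Δ) * (1 - y))
    (hy : y ≤ exp (-Δ) * (1 - x)) : Δ * tanh (Δ / 2) ≤ HfunTangent Δ x y := by
  set E := exp Δ
  have hE : 1 < E := one_lt_exp_iff.2 hΔ
  have hE₂ : 0 < E ^ 2 - 1 := by nlinarith
  have hE' : exp (-Δ) = E⁻¹ := exp_neg Δ
  have hsq : exp (2 * Δ) = E ^ 2 := by rw [← exp_nat_mul]; norm_num
  have hcoef₁ : 0 ≤ E ^ 2 - 1 - 2 * Δ := by linarith [add_one_le_exp (2 * Δ)]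
  have hcoef₂ : 0 ≤ 2 * Δ * E ^ 2 - E ^ 2 + 1 := by
    have h := mul_le_mul_of_nonneg_left (add_one_le_exp (-(2 * Δ))) (sq_nonneg E)
    rw [exp_neg, hsq] at h
    field_simp at h
    linarith
  have hx' : 0 ≤ 1 - y - E * x := by rw [hE'] at hx; field_simp at hx; linarith
  have hy' : 0 ≤ 1 - x - E * y := by rw [hE'] at hy; field_simp at hy; linarith
  rw [← sub_nonneg, HfunTangent, hE', tanh_half_eq]
  -- LP duality: the slack is a nonnegative combination of the two constraint slacks
  have key : 1 + Δ * (1 - 2 * x) - E⁻¹ * (1 - y) - E * y - Δ * ((E - 1) / (E + 1)) =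
      (E * (E ^ 2 - 1 - 2 * Δ) * (1 - x - E * y) + (2 * Δ * E ^ 2 - E ^ 2 + 1) * (1 - y - E * x))
        / ((E ^ 2 - 1) * E) := by
    field_simp
    ring
  rw [key]
  positivity

theorem Hfun_inv_one_add_exp (Δ : ℝ) :
    Hfun (1 / (1 + exp Δ)) (1 / (1 + exp Δ)) = Δ * tanh (Δ / 2) := by
  have hE := exp_pos Δ
  have hc : 1 - 1 / (1 + exp Δ) = exp Δ / (1 + exp Δ) := by field_simp; ring
  rw [Hfun, hc, tanh_half_eq, div_div_div_cancel_right₀ (by positivity),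
    div_div_div_cancel_right₀ (by positivity), div_one, one_div (exp Δ), ← exp_neg, log_exp,
    log_exp]
  field_simp
  ring

theorem stmt_15 (Δ : ℝ) (hΔ : 0 < Δ) :
    (∀ a b : ℝ, 0 < a → a < 1 → 0 < b → b < 1 →
      a ≤ Real.exp (-Δ) * (1 - b) → b ≤ Real.exp (-Δ) * (1 - a) →
      Δ * Real.tanh (Δ / 2) ≤ Hfun b a) ∧
    Hfun (1 / (1 + Real.exp Δ)) (1 / (1 + Real.exp Δ)) = Δ * Real.tanh (Δ / 2) :=
  ⟨fun _ _ ha₀ ha₁ hb₀ hb₁ ha hb =>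
    (mul_tanh_half_le_HfunTangent hΔ hb ha).trans (HfunTangent_le_Hfun Δ hb₀ hb₁ ha₀ ha₁),
    Hfun_inv_one_add_exp Δ⟩
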